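/- arXiv:2411.01625 — 2 statements merged into one kernel-verified Lean document; each statement's English description precedes it below -/
import Mathlib

section
/- Let f be a square-integrable function of independent random variables W = (W1,...,WK) with i.i.d. copy W', and let I_S(w,w') = sum over S' subset of S of (-1)^{|S|-|S'|} f(w'_{S'}, w_{-S'}) be the interaction contrast. For any two disjoint subsets S and S' of {1,...,K}, Cov(I_S(W,W'), I_{S'}(W,W')) = (-1/2)^{|S|+|S'|} * Var(I_{S ∪ S'}(W, W')). -/
/-!
For `C ⊆ {1, …, K}` let `σ_C` (`hybridSwap C`) exchange the coordinates in `C` between `w`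
and `w'`. Since the pairs `(W i, W' i)` are independent and each is exchangeable, `σ_C`
preserves the joint law of `(W, W')`, and on hybrid points it acts by symmetric difference:
`hybrid A ∘ σ_B = hybrid (A ∆ B)`. Consequently `I_R ∘ σ_B = (-1)^|B| I_R` for `B ⊆ R`, while for
disjoint `S`, `S'` the alternating sum of the `I_S ∘ σ_B`, `B ⊆ S'`, is `I_{S ∪ S'}`.
Put `U = S ∪ S'` and `c = E[I_U f(W)]`. Expanding one factor of a product of contrasts and
moving each `f(hybrid B)` back to `f(W)` with `σ_B` gives `E[I_S I_{S'}] = c` and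
`E[I_U²] = (-2)^|U| c`; applying `σ_{i}` with `i ∈ R` shows `E[I_R] = 0` for `R ≠ ∅`.
-/

open MeasureTheory ProbabilityTheory Finset

/-- Hybrid point: coordinates in `S'` from `w'`, the rest from `w`. -/
def hybrid {K : ℕ} (S' : Finset (Fin K)) (w' w : Fin K → ℝ) : Fin K → ℝ :=
  fun i => if i ∈ S' then w' i else w i

/-- Interaction contrast of `f` with respect to `S`, anchored at `w`, evaluated at `w'`. -/
def interactionContrast {K : ℕ} (f : (Fin K → ℝ) → ℝ) (S : Finset (Fin K))
    (w w' : Fin K → ℝ) : ℝ :=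
  ∑ S' ∈ S.powerset, (-1 : ℝ)^(S.card - S'.card) * f (hybrid S' w' w)

open scoped symmDiff

section Combinatorics

variable {α R : Type*} [CommRing R]

lemma neg_one_pow_card_sub_card {A B : Finset α} (h : A ⊆ B) :
    (-1 : R) ^ (#B - #A) = (-1) ^ #B * (-1) ^ #A := by
  conv_rhs => rw [← Nat.sub_add_cancel (card_le_card h)]
  rw [pow_add, mul_assoc, ← pow_add, ← two_mul, pow_mul]
  simp

variable [DecidableEq α]

lemma neg_one_pow_card_symmDiff (A B : Finset α) :
    (-1 : R) ^ #(A ∆ B) = (-1) ^ #A * (-1) ^ #B := by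
  have hA := card_sdiff_add_card_inter A B
  have hB := card_sdiff_add_card_inter B A
  rw [inter_comm] at hB
  rw [symmDiff_def, sup_eq_union, card_union_of_disjoint disjoint_sdiff_sdiff, ← hA, ← hB,
    pow_add, pow_add, pow_add]
  ring_nf
  simp

lemma sum_powerset_symmDiff_of_subset {U B : Finset α} (hB : B ⊆ U) (φ : Finset α → R) :
    ∑ A ∈ U.powerset, (-1) ^ (#U - #A) * φ (A ∆ B)
      = (-1) ^ #B * ∑ A ∈ U.powerset, (-1) ^ (#U - #A) * φ A := by
  have hmem {A} (hA : A ∈ U.powerset) : A ∆ B ∈ U.powerset :=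
    mem_powerset.2 <| symmDiff_le_sup.trans (sup_le (mem_powerset.1 hA) hB)
  rw [mul_sum]
  refine sum_nbij' (· ∆ B) (· ∆ B) (fun A ↦ hmem) (fun A ↦ hmem)
    (fun A _ ↦ symmDiff_symmDiff_cancel_right B A) (fun A _ ↦ symmDiff_symmDiff_cancel_right B A)
    fun A hA ↦ ?_
  rw [neg_one_pow_card_sub_card (mem_powerset.1 hA),
    neg_one_pow_card_sub_card (mem_powerset.1 (hmem hA)), neg_one_pow_card_symmDiff]
  ring_nf
  simp

lemma sum_powerset_symmDiff_of_disjoint {S T : Finset α} (h : Disjoint S T) (φ : Finset α → R) :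
    ∑ B ∈ T.powerset, (-1) ^ (#T - #B) * ∑ A ∈ S.powerset, (-1) ^ (#S - #A) * φ (A ∆ B)
      = ∑ D ∈ (S ∪ T).powerset, (-1) ^ (#(S ∪ T) - #D) * φ D := by
  simp_rw [mul_sum, sum_comm (s := T.powerset), ← sum_product']
  refine sum_nbij' (fun x ↦ x.1 ∪ x.2) (fun D ↦ (D ∩ S, D ∩ T)) ?_ ?_ ?_ ?_ ?_
  · simp only [mem_product, mem_powerset, and_imp, Prod.forall]
    exact fun A B hA hB ↦ union_subset_union hA hB
  · simp only [mem_product, mem_powerset]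
    exact fun D _ ↦ ⟨inter_subset_right, inter_subset_right⟩
  · simp only [mem_product, mem_powerset, and_imp, Prod.forall, Prod.mk.injEq]
    intro A B hA hB
    rw [union_inter_distrib_right, union_inter_distrib_right, inter_eq_left.2 hA,
      inter_eq_left.2 hB, disjoint_iff_inter_eq_empty.1 (h.symm.mono_left hB),
      disjoint_iff_inter_eq_empty.1 (h.mono_left hA), union_empty, empty_union]
    exact ⟨rfl, rfl⟩
  · simp only [mem_powerset, ← inter_union_distrib_left]
    exact fun D hD ↦ inter_eq_left.2 hD
  · simp only [mem_product, mem_powerset, and_imp, Prod.forall]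
    intro A B hA hB
    have hAB : Disjoint A B := h.mono hA hB
    rw [hAB.symmDiff_eq_sup, sup_eq_union, neg_one_pow_card_sub_card hA,
      neg_one_pow_card_sub_card hB, neg_one_pow_card_sub_card (union_subset_union hA hB),
      card_union_of_disjoint h, card_union_of_disjoint hAB]
    ring

end Combinatorics

variable {K : ℕ}

lemma hybrid_empty (w' w : Fin K → ℝ) : hybrid ∅ w' w = w := by
  ext i
  simp [hybrid]

lemma hybrid_hybrid (A B : Finset (Fin K)) (w w' : Fin K → ℝ) :
    hybrid A (hybrid B w w') (hybrid B w' w) = hybrid (A ∆ B) w' w := by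
  ext i
  by_cases hA : i ∈ A <;> by_cases hB : i ∈ B <;> simp [hybrid, mem_symmDiff, hA, hB]

lemma measurable_hybrid (C : Finset (Fin K)) :
    Measurable fun p : (Fin K → ℝ) × (Fin K → ℝ) ↦ hybrid C p.2 p.1 := by
  refine measurable_pi_lambda _ fun i ↦ ?_
  by_cases hi : i ∈ C <;> simp only [hybrid, hi, if_true, if_false] <;> fun_prop

def hybridSwap (C : Finset (Fin K)) :
    ((Fin K → ℝ) × (Fin K → ℝ)) ≃ᵐ ((Fin K → ℝ) × (Fin K → ℝ)) where
  toFun p := (hybrid C p.2 p.1, hybrid C p.1 p.2)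
  invFun p := (hybrid C p.2 p.1, hybrid C p.1 p.2)
  left_inv p := by simp [hybrid_hybrid, hybrid_empty]
  right_inv p := by simp [hybrid_hybrid, hybrid_empty]
  measurable_toFun := (measurable_hybrid C).prodMk ((measurable_hybrid C).comp measurable_swap)
  measurable_invFun := (measurable_hybrid C).prodMk ((measurable_hybrid C).comp measurable_swap)

lemma measurePreserving_hybridSwap (m : Fin K → Measure ℝ) [∀ i, SigmaFinite (m i)]
    (C : Finset (Fin K)) :
    MeasurePreserving (hybridSwap C) ((Measure.pi m).prod (Measure.pi m))
      ((Measure.pi m).prod (Measure.pi m)) := by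
  have he := measurePreserving_arrowProdEquivProdArrow ℝ ℝ (Fin K) m m
  have hswap : MeasurePreserving
      (fun (q : Fin K → ℝ × ℝ) i ↦ (if i ∈ C then Prod.swap else id) (q i))
      (Measure.pi fun i ↦ (m i).prod (m i)) (Measure.pi fun i ↦ (m i).prod (m i)) :=
    measurePreserving_pi _ _ fun i ↦ by
      split_ifs
      exacts [Measure.measurePreserving_swap, MeasurePreserving.id _]
  convert he.comp (hswap.comp he.symm) using 1
  ext p i <;> by_cases hi : i ∈ C <;>
    simp [hybridSwap, hybrid, hi, MeasurableEquiv.arrowProdEquivProdArrow]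

lemma interactionContrast_hybrid_swap (f : (Fin K → ℝ) → ℝ) {R B : Finset (Fin K)} (hB : B ⊆ R)
    (w w' : Fin K → ℝ) :
    interactionContrast f R (hybrid B w' w) (hybrid B w w')
      = (-1) ^ #B * interactionContrast f R w w' := by
  simp only [interactionContrast, hybrid_hybrid]
  exact sum_powerset_symmDiff_of_subset hB fun A ↦ f (hybrid A w' w)

lemma sum_interactionContrast_hybrid_swap (f : (Fin K → ℝ) → ℝ) {S S' : Finset (Fin K)}
    (h : Disjoint S S') (w w' : Fin K → ℝ) :
    ∑ B ∈ S'.powerset, (-1) ^ (#S' - #B) * interactionContrast f S (hybrid B w' w) (hybrid B w w')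
      = interactionContrast f (S ∪ S') w w' := by
  simp only [interactionContrast, hybrid_hybrid]
  exact sum_powerset_symmDiff_of_disjoint h fun A ↦ f (hybrid A w' w)

lemma measurable_interactionContrast {f : (Fin K → ℝ) → ℝ} (hf : Measurable f)
    (R : Finset (Fin K)) :
    Measurable fun p : (Fin K → ℝ) × (Fin K → ℝ) ↦ interactionContrast f R p.1 p.2 :=
  measurable_sum _ fun T _ ↦ measurable_const.mul (hf.comp (measurable_hybrid T))

section SwapInvariant

variable {ν : Measure ((Fin K → ℝ) × (Fin K → ℝ))} {f : (Fin K → ℝ) → ℝ}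

lemma memLp_interactionContrast (hν : ∀ C, MeasurePreserving (hybridSwap C) ν ν)
    (hf : MemLp (fun p ↦ f p.1) 2 ν) (R : Finset (Fin K)) :
    MemLp (fun p ↦ interactionContrast f R p.1 p.2) 2 ν :=
  memLp_finsetSum _ fun T _ ↦ (hf.comp_measurePreserving (hν T)).const_mul _

lemma integral_comp_hybridSwap (hν : ∀ C, MeasurePreserving (hybridSwap C) ν ν)
    (C : Finset (Fin K)) (F : (Fin K → ℝ) × (Fin K → ℝ) → ℝ) :
    ∫ p, F (hybrid C p.2 p.1, hybrid C p.1 p.2) ∂ν = ∫ p, F p ∂ν :=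
  (hν C).integral_comp' F

lemma integral_interactionContrast (hν : ∀ C, MeasurePreserving (hybridSwap C) ν ν)
    (R : Finset (Fin K)) :
    ∫ p, interactionContrast f R p.1 p.2 ∂ν = if R = ∅ then ∫ p, f p.1 ∂ν else 0 := by
  split_ifs with hR
  · simp [hR, interactionContrast, hybrid_empty]
  obtain ⟨i, hi⟩ := nonempty_iff_ne_empty.2 hR
  have h := integral_comp_hybridSwap hν {i} fun p ↦ interactionContrast f R p.1 p.2
  simp only [interactionContrast_hybrid_swap f (singleton_subset_iff.2 hi), card_singleton,
    pow_one, neg_one_mul, integral_neg] at h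
  linarith

lemma integral_interactionContrast_mul (hν : ∀ C, MeasurePreserving (hybridSwap C) ν ν)
    (hf : MemLp (fun p ↦ f p.1) 2 ν) (R R' : Finset (Fin K)) :
    ∫ p, interactionContrast f R p.1 p.2 * interactionContrast f R' p.1 p.2 ∂ν
      = ∑ B ∈ R'.powerset, (-1) ^ (#R' - #B) *
          ∫ p, interactionContrast f R (hybrid B p.2 p.1) (hybrid B p.1 p.2) * f p.1 ∂ν := by
  have hint (B : Finset (Fin K)) :
      Integrable (fun p ↦ interactionContrast f R p.1 p.2 * f (hybrid B p.2 p.1)) ν :=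
    (memLp_interactionContrast hν hf R).integrable_mul (hf.comp_measurePreserving (hν B))
  have hswap (B : Finset (Fin K)) :
      ∫ p, interactionContrast f R p.1 p.2 * f (hybrid B p.2 p.1) ∂ν
        = ∫ p, interactionContrast f R (hybrid B p.2 p.1) (hybrid B p.1 p.2) * f p.1 ∂ν := by
    rw [← integral_comp_hybridSwap hν B]
    simp only [hybrid_hybrid, symmDiff_self, bot_eq_empty, hybrid_empty]
  simp_rw [interactionContrast.eq_1 f R', mul_sum, mul_left_comm (interactionContrast f R _ _)]
  rw [integral_finsetSum _ fun B _ ↦ (hint B).const_mul _]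
  simp_rw [integral_const_mul, hswap]

theorem covariance_interactionContrast [IsProbabilityMeasure ν]
    (hν : ∀ C, MeasurePreserving (hybridSwap C) ν ν) (hf : MemLp (fun p ↦ f p.1) 2 ν)
    {S S' : Finset (Fin K)} (h : Disjoint S S') :
    (∫ p, interactionContrast f S p.1 p.2 * interactionContrast f S' p.1 p.2 ∂ν)
        - (∫ p, interactionContrast f S p.1 p.2 ∂ν) * (∫ p, interactionContrast f S' p.1 p.2 ∂ν)
      = (-(1/2) : ℝ) ^ (#S + #S')
        * variance (fun p ↦ interactionContrast f (S ∪ S') p.1 p.2) ν := by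
  set U := S ∪ S'
  set c := ∫ p, interactionContrast f U p.1 p.2 * f p.1 ∂ν
  have hcross :
      ∫ p, interactionContrast f S p.1 p.2 * interactionContrast f S' p.1 p.2 ∂ν = c := by
    have hint (B : Finset (Fin K)) : Integrable
        (fun p ↦ interactionContrast f S (hybrid B p.2 p.1) (hybrid B p.1 p.2) * f p.1) ν :=
      ((memLp_interactionContrast hν hf S).comp_measurePreserving (hν B)).integrable_mul hf
    simp_rw [c, U, ← sum_interactionContrast_hybrid_swap f h, sum_mul, mul_assoc]
    rw [integral_interactionContrast_mul hν hf,
      integral_finsetSum _ fun B _ ↦ (hint B).const_mul _]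
    simp_rw [integral_const_mul]
  have hsquare : ∫ p, interactionContrast f U p.1 p.2 * interactionContrast f U p.1 p.2 ∂ν
      = (-2) ^ #U * c := by
    have hterm : ∀ B ∈ U.powerset, (-1) ^ (#U - #B) *
        ∫ p, interactionContrast f U (hybrid B p.2 p.1) (hybrid B p.1 p.2) * f p.1 ∂ν
          = (-1) ^ #U * c := fun B hB ↦ by
      have hB := mem_powerset.1 hB
      have hsign : (-1 : ℝ) ^ #B * (-1) ^ #B = 1 := by rw [← mul_pow]; simp
      simp_rw [interactionContrast_hybrid_swap f hB, mul_assoc, integral_const_mul,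
        neg_one_pow_card_sub_card hB]
      linear_combination ((-1) ^ #U * c) * hsign
    rw [integral_interactionContrast_mul hν hf, sum_congr rfl hterm, sum_const, card_powerset,
      nsmul_eq_mul, neg_pow (2 : ℝ)]
    push_cast
    ring
  set E := ∫ p, f p.1 ∂ν
  have hmean : ((if S = ∅ then E else 0) * if S' = ∅ then E else 0)
      = (-(1/2) : ℝ) ^ #U * (if U = ∅ then E else 0) ^ 2 := by
    by_cases hS : S = ∅ <;> by_cases hS' : S' = ∅ <;> simp [U, hS, hS', sq]
  have hpow : (-(1/2) : ℝ) ^ #U * (-2) ^ #U = 1 := by rw [← mul_pow]; norm_num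
  rw [variance_eq_sub (memLp_interactionContrast hν hf U)]
  simp only [Pi.pow_apply, sq]
  rw [hcross, hsquare, integral_interactionContrast hν S, integral_interactionContrast hν S',
    integral_interactionContrast hν U, ← card_union_of_disjoint h]
  linear_combination -c * hpow - hmean

end SwapInvariant

lemma map_prodMk_eq_prod_pi {Ω ι X : Type*} [MeasurableSpace Ω] [Fintype ι] [MeasurableSpace X]
    {μ : Measure Ω} [IsProbabilityMeasure μ] {W W' : Ω → ι → X}
    (hW : Measurable W) (hW' : Measurable W') (hiW : iIndepFun (fun i ω ↦ W ω i) μ)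
    (hcopy : μ.map W' = μ.map W) (hindep : IndepFun W W' μ) :
    μ.map (fun ω ↦ (W ω, W' ω))
      = (Measure.pi fun i ↦ μ.map fun ω ↦ W ω i).prod (Measure.pi fun i ↦ μ.map fun ω ↦ W ω i) := by
  rw [(indepFun_iff_map_prod_eq_prod_map_map hW.aemeasurable hW'.aemeasurable).1 hindep, hcopy,
    ← hiW.map_fun_eq_pi_map fun i ↦ by fun_prop]

/-- `Cov(I_S(W,W'), I_{S'}(W,W')) = (-1/2)^{|S|+|S'|} Var(I_{S ∪ S'}(W,W'))`
for disjoint `S`, `S'`. -/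
theorem stmt6 {Ω : Type*} [MeasurableSpace Ω] (μ : Measure Ω) [IsProbabilityMeasure μ]
    {K : ℕ} (W W' : Ω → Fin K → ℝ)
    (hW : Measurable W) (hW' : Measurable W')
    (hiW : iIndepFun
      (fun i ω => W ω i) μ)
    (hcopy : μ.map W' = μ.map W)
    (hindep : IndepFun W W' μ)
    (f : (Fin K → ℝ) → ℝ) (hf : Measurable f)
    (hL2 : MemLp (fun ω => f (W ω)) 2 μ)
    (S S' : Finset (Fin K)) (hdisj : Disjoint S S') :
    (∫ ω, interactionContrast f S (W ω) (W' ω) * interactionContrast f S' (W ω) (W' ω) ∂μ)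
        - (∫ ω, interactionContrast f S (W ω) (W' ω) ∂μ)
          * (∫ ω, interactionContrast f S' (W ω) (W' ω) ∂μ)
      = (-(1/2) : ℝ)^(S.card + S'.card)
        * variance (fun ω => interactionContrast f (S ∪ S') (W ω) (W' ω)) μ := by
  have hZ : Measurable fun ω ↦ (W ω, W' ω) := hW.prodMk hW'
  have : IsProbabilityMeasure (μ.map fun ω ↦ (W ω, W' ω)) :=
    Measure.isProbabilityMeasure_map hZ.aemeasurable
  have (i : Fin K) : IsProbabilityMeasure (μ.map fun ω ↦ W ω i) :=
    Measure.isProbabilityMeasure_map (by fun_prop)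
  have hswap (C : Finset (Fin K)) : MeasurePreserving (hybridSwap C)
      (μ.map fun ω ↦ (W ω, W' ω)) (μ.map fun ω ↦ (W ω, W' ω)) :=
    map_prodMk_eq_prod_pi hW hW' hiW hcopy hindep ▸ measurePreserving_hybridSwap _ C
  have hfL2 : MemLp (fun p ↦ f p.1) 2 (μ.map fun ω ↦ (W ω, W' ω)) :=
    (memLp_map_measure_iff (hf.comp measurable_fst).aestronglyMeasurable hZ.aemeasurable).2 hL2
  have hI := measurable_interactionContrast hf
  have h := covariance_interactionContrast hswap hfL2 hdisj
  rwa [integral_map hZ.aemeasurable (by fun_prop), integral_map hZ.aemeasurable (by fun_prop),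
    integral_map hZ.aemeasurable (by fun_prop),
    variance_map (hI _).aemeasurable hZ.aemeasurable] at h
end

section
/- Let S be a nonempty subset of {1,...,K} and suppose the last index K is not in S. Let W have independent coordinates, W' an i.i.d. copy, f square-integrable. Then Var(I_{S ∪ {K}}(W,W')) = 2*Var(I_S(W,W')) - 2*E[T_K(I_S(W,W')) * I_S(W,W')], where T_K swaps W_K and W'_K in the expression, and moreover E[T_K(I_S(W,W')) * I_S(W,W')] = E[ (E[I_S(W,W') | W_{-K}, W'_{-K}])^2 ] >= 0. -/
/-
Write `I = I_S(W, W')` and `T = T_k I`. Since `k ∉ S`, `I_{S ∪ {k}}(W, W') = T - I`, and both `I`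
and `T` are `ψ(Q, ·)` evaluated at `W_k` and at `W'_k` respectively, where `Q = (W_{-k}, W'_{-k})`.
The law of `(Q, W_k, W'_k)` is a product `ρ ⊗ ν ⊗ ν`, so `T` and `I` are identically distributed,
both are centred (each hybrid point `hybrid S' W' W` has the law of `W` and the signs of the
contrast sum to zero), and `Var(T - I) = 2 Var I - 2 E[T I]`. Conditionally on `Q`, `W_k` and
`W'_k` are i.i.d. with law `ν`, hence `E[T I] = E[g(Q)²]` with `g(q) = ∫ ψ(q, u) dν(u)`, and `g(Q)`
is the conditional expectation of `I` given `Q`.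
-/

open MeasureTheory ProbabilityTheory Finset

/-- The σ-algebra generated by the coordinates of `W` and `W'` other than the `k`-th. -/
def coordSigmaPairNot {Ω : Type*} [MeasurableSpace Ω] {K : ℕ} (W W' : Ω → Fin K → ℝ)
    (k : Fin K) : MeasurableSpace Ω :=
  MeasurableSpace.comap
    (fun ω => ((fun i : {i : Fin K // i ≠ k} => W ω i),
               (fun i : {i : Fin K // i ≠ k} => W' ω i))) inferInstance

lemma neg_one_pow_sub_eq_mul {R : Type*} [CommRing R] {m n : ℕ} (h : m ≤ n) :
    (-1 : R) ^ (n - m) = (-1) ^ n * (-1) ^ m := by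
  rw [← pow_sub_mul_pow (-1 : R) h, mul_assoc, ← mul_pow, neg_one_mul, neg_neg, one_pow, mul_one]

lemma sum_powerset_neg_one_pow_card_sub {α R : Type*} [CommRing R] {S : Finset α}
    (hS : S.Nonempty) : ∑ T ∈ S.powerset, (-1 : R) ^ (#S - #T) = 0 := by
  have h := congrArg (Int.cast : ℤ → R) (sum_powerset_neg_one_pow_card_of_nonempty hS)
  push_cast at h
  rw [sum_congr rfl fun T hT => neg_one_pow_sub_eq_mul (card_le_card (mem_powerset.mp hT)),
    ← mul_sum, h, mul_zero]

section InteractionContrast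

variable {K : ℕ}

lemma interactionContrast_congr_right (f : (Fin K → ℝ) → ℝ) (S : Finset (Fin K))
    {w w' w'' : Fin K → ℝ} (h : ∀ i ∈ S, w' i = w'' i) :
    interactionContrast f S w w' = interactionContrast f S w w'' := by
  refine sum_congr rfl fun T hT => ?_
  congr 2
  funext i
  by_cases hi : i ∈ T
  · simp [hybrid, hi, h i (mem_powerset.mp hT hi)]
  · simp [hybrid, hi]

lemma interactionContrast_update_right (f : (Fin K → ℝ) → ℝ) {S : Finset (Fin K)} {k : Fin K}
    (hk : k ∉ S) (w w' : Fin K → ℝ) (a : ℝ) :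
    interactionContrast f S w (Function.update w' k a) = interactionContrast f S w w' :=
  interactionContrast_congr_right f S fun i hi =>
    Function.update_of_ne (fun h : i = k => hk (h ▸ hi)) _ _

lemma hybrid_insert {T : Finset (Fin K)} {k : Fin K} (hk : k ∉ T) (w' w : Fin K → ℝ) :
    hybrid (insert k T) w' w = hybrid T w' (Function.update w k (w' k)) := by
  funext i
  by_cases hi : i ∈ T
  · simp [hybrid, hi]
  · by_cases hik : i = k
    · subst hik; simp [hybrid, hi]
    · simp [hybrid, hi, hik]

lemma interactionContrast_union_singleton (f : (Fin K → ℝ) → ℝ) {S : Finset (Fin K)} {k : Fin K}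
    (hk : k ∉ S) (w w' : Fin K → ℝ) :
    interactionContrast f (S ∪ {k}) w w'
      = interactionContrast f S (Function.update w k (w' k)) (Function.update w' k (w k))
        - interactionContrast f S w w' := by
  rw [interactionContrast_update_right f hk, union_comm, ← insert_eq, interactionContrast,
    sum_powerset_insert hk, interactionContrast, interactionContrast, add_comm, sub_eq_add_neg,
    ← sum_neg_distrib, card_insert_of_notMem hk]
  congr 1
  · refine sum_congr rfl fun T hT => ?_
    have hkT : k ∉ T := fun h => hk (mem_powerset.mp hT h)
    rw [card_insert_of_notMem hkT, Nat.add_sub_add_right, hybrid_insert hkT]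
  · refine sum_congr rfl fun T hT => ?_
    rw [Nat.succ_sub (card_le_card (mem_powerset.mp hT)), pow_succ]
    ring

lemma measurable_interactionContrast_s17 {f : (Fin K → ℝ) → ℝ} (hf : Measurable f)
    (S : Finset (Fin K)) :
    Measurable fun z : (Fin K → ℝ) × (Fin K → ℝ) => interactionContrast f S z.1 z.2 := by
  refine Finset.measurable_sum _ fun T _ =>
    (hf.comp (measurable_pi_lambda _ fun i => ?_)).const_mul _
  by_cases hi : i ∈ T
  · simpa [hybrid, hi] using measurable_snd.eval
  · simpa [hybrid, hi] using measurable_fst.eval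

end InteractionContrast

lemma MeasureTheory.MeasurePreserving.integral_comp_of_aestronglyMeasurable {α β : Type*}
    [MeasurableSpace α] [MeasurableSpace β] {μ : Measure α} {ν : Measure β} {φ : α → β}
    (hφ : MeasurePreserving φ μ ν) {g : β → ℝ} (hg : AEStronglyMeasurable g ν) :
    ∫ x, g (φ x) ∂μ = ∫ y, g y ∂ν := by
  rw [← hφ.map_eq] at hg ⊢
  exact (integral_map hφ.aemeasurable hg).symm

section ProductLaws

variable {ι γ : Type*} [Fintype ι] [MeasurableSpace γ]

lemma measurePreserving_restrict_eval [DecidableEq ι] (ν : ι → Measure γ)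
    [∀ i, IsProbabilityMeasure (ν i)] (k : ι) :
    MeasurePreserving (fun w : ι → γ => (fun j : {j // j ≠ k} => w j, w k))
      (Measure.pi ν) ((Measure.pi fun j : {j // j ≠ k} => ν j).prod (ν k)) :=
  ((MeasurePreserving.id _).prod
    (measurePreserving_eval (fun j : {j // ¬ j ≠ k} => ν j) ⟨k, not_not.2 rfl⟩)).comp
    (measurePreserving_piEquivPiSubtypeProd ν (· ≠ k))

lemma measurePreserving_restrict_eval_prod [DecidableEq ι] (ν : ι → Measure γ)
    [∀ i, IsProbabilityMeasure (ν i)] (k : ι) :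
    MeasurePreserving
      (fun z : (ι → γ) × (ι → γ) =>
        ((fun j : {j // j ≠ k} => z.1 j, fun j : {j // j ≠ k} => z.2 j), z.1 k, z.2 k))
      ((Measure.pi ν).prod (Measure.pi ν))
      (((Measure.pi fun j : {j // j ≠ k} => ν j).prod
        (Measure.pi fun j : {j // j ≠ k} => ν j)).prod ((ν k).prod (ν k))) :=
  ((measurePreserving_arrowProdEquivProdArrow γ γ _ _ _).prod (MeasurePreserving.id _)).comp
    ((measurePreserving_restrict_eval (fun i => (ν i).prod (ν i)) k).comp
      (measurePreserving_arrowProdEquivProdArrow γ γ ι ν ν).symm)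

lemma measurePreserving_prodMk_of_iIndepFun {Ω : Type*} [MeasurableSpace Ω] {μ : Measure Ω}
    [IsProbabilityMeasure μ] {W W' : Ω → ι → γ} (hW : Measurable W) (hW' : Measurable W')
    (hiW : iIndepFun (fun i ω => W ω i) μ) (hcopy : μ.map W' = μ.map W)
    (hindep : IndepFun W W' μ) :
    MeasurePreserving (fun ω => (W ω, W' ω)) μ
      ((Measure.pi fun i => μ.map (W · i)).prod (Measure.pi fun i => μ.map (W · i))) := by
  have hπ : μ.map W = Measure.pi fun i => μ.map (W · i) :=
    hiW.map_fun_eq_pi_map fun i => hW.eval.aemeasurable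
  refine ⟨hW.prodMk hW', ?_⟩
  rw [(indepFun_iff_map_prod_eq_prod_map_map hW.aemeasurable hW'.aemeasurable).mp hindep, hcopy,
    hπ]

end ProductLaws

section Hybrid

variable {K : ℕ} (ν : Fin K → Measure ℝ) [∀ i, IsProbabilityMeasure (ν i)]

lemma measurePreserving_hybrid (T : Finset (Fin K)) :
    MeasurePreserving (fun z : (Fin K → ℝ) × (Fin K → ℝ) => hybrid T z.2 z.1)
      ((Measure.pi ν).prod (Measure.pi ν)) (Measure.pi ν) := by
  have hsel : ∀ i, MeasurePreserving (fun p : ℝ × ℝ => if i ∈ T then p.2 else p.1)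
      ((ν i).prod (ν i)) (ν i) := fun i => by
    split_ifs
    · exact measurePreserving_snd
    · exact measurePreserving_fst
  exact (measurePreserving_pi _ _ hsel).comp
    (measurePreserving_arrowProdEquivProdArrow ℝ ℝ (Fin K) ν ν).symm

variable {ν}

lemma memLp_interactionContrast_s17 {f : (Fin K → ℝ) → ℝ} {p : ENNReal}
    (hf : MemLp f p (Measure.pi ν)) (S : Finset (Fin K)) :
    MemLp (fun z : (Fin K → ℝ) × (Fin K → ℝ) => interactionContrast f S z.1 z.2) p
      ((Measure.pi ν).prod (Measure.pi ν)) :=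
  memLp_finsetSum _ fun T _ =>
    (hf.comp_measurePreserving (measurePreserving_hybrid ν T)).const_mul _

/-- Every hybrid point has law `Measure.pi ν`, so the signs cancel. -/
lemma integral_interactionContrast_eq_zero {f : (Fin K → ℝ) → ℝ}
    (hf : Integrable f (Measure.pi ν)) {S : Finset (Fin K)} (hS : S.Nonempty) :
    ∫ z, interactionContrast f S z.1 z.2 ∂((Measure.pi ν).prod (Measure.pi ν)) = 0 := by
  have hint : ∀ T : Finset (Fin K),
      Integrable (fun z => f (hybrid T z.2 z.1)) ((Measure.pi ν).prod (Measure.pi ν)) :=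
    fun T => (measurePreserving_hybrid ν T).integrable_comp_of_integrable hf
  have hhyb : ∀ T : Finset (Fin K),
      ∫ z, f (hybrid T z.2 z.1) ∂((Measure.pi ν).prod (Measure.pi ν)) = ∫ w, f w ∂(Measure.pi ν) :=
    fun T => (measurePreserving_hybrid ν T).integral_comp_of_aestronglyMeasurable hf.1
  simp only [interactionContrast]
  rw [integral_finsetSum _ fun T _ => (hint T).const_mul _]
  simp only [integral_const_mul, hhyb, ← sum_mul, sum_powerset_neg_one_pow_card_sub hS, zero_mul]

end Hybrid

section ExchangeableCopies

variable {Ω α β : Type*} [MeasurableSpace Ω] [mα : MeasurableSpace α] [MeasurableSpace β]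
  {μ : Measure Ω} {ρ : Measure α} {ν : Measure β} [IsProbabilityMeasure ν] {Q : Ω → α}
  {U U' : Ω → β}

lemma condExp_comp_prodMk_ae_eq_integral [IsFiniteMeasure μ] [StandardBorelSpace β] [Nonempty β]
    (hQU : MeasurePreserving (fun ω => (Q ω, U ω)) μ (ρ.prod ν)) {ψ : α × β → ℝ}
    (hψ : StronglyMeasurable ψ) (hint : Integrable (fun ω => ψ (Q ω, U ω)) μ) :
    μ[fun ω => ψ (Q ω, U ω) | mα.comap Q] =ᵐ[μ] fun ω => ∫ u, ψ (Q ω, u) ∂ν := by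
  have hQ : Measurable Q := measurable_fst.comp hQU.measurable
  have hU : Measurable U := measurable_snd.comp hQU.measurable
  have hlawQ : μ.map Q = ρ := (measurePreserving_fst.comp hQU).map_eq
  have hcond : condDistrib U Q μ =ᵐ[μ.map Q] Kernel.const α ν := by
    rw [condDistrib_ae_eq_iff_measure_eq_compProd Q hU.aemeasurable, Measure.compProd_const, hlawQ]
    exact hQU.map_eq
  filter_upwards [condExp_prod_ae_eq_integral_condDistrib hQ hU.aemeasurable hψ hint,
    ae_of_ae_map hQ.aemeasurable hcond] with ω hω hνω
  rw [hω, hνω, Kernel.const_apply]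

variable [IsProbabilityMeasure ρ]

lemma MeasureTheory.MeasurePreserving.prodMk_of_prodMk_prodMk_fst
    (hQUU : MeasurePreserving (fun ω => (Q ω, U ω, U' ω)) μ (ρ.prod (ν.prod ν))) :
    MeasurePreserving (fun ω => (Q ω, U ω)) μ (ρ.prod ν) :=
  ((MeasurePreserving.id ρ).prod measurePreserving_fst).comp hQUU

lemma MeasureTheory.MeasurePreserving.prodMk_of_prodMk_prodMk_snd
    (hQUU : MeasurePreserving (fun ω => (Q ω, U ω, U' ω)) μ (ρ.prod (ν.prod ν))) :
    MeasurePreserving (fun ω => (Q ω, U' ω)) μ (ρ.prod ν) :=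
  ((MeasurePreserving.id ρ).prod measurePreserving_snd).comp hQUU

lemma identDistrib_comp_prodMk_swap
    (hQUU : MeasurePreserving (fun ω => (Q ω, U ω, U' ω)) μ (ρ.prod (ν.prod ν)))
    {ψ : α × β → ℝ} (hψ : Measurable ψ) :
    IdentDistrib (fun ω => ψ (Q ω, U' ω)) (fun ω => ψ (Q ω, U ω)) μ μ :=
  have hQU := hQUU.prodMk_of_prodMk_prodMk_fst
  have hQU' := hQUU.prodMk_of_prodMk_prodMk_snd
  IdentDistrib.comp ⟨hQU'.aemeasurable, hQU.aemeasurable, hQU'.map_eq.trans hQU.map_eq.symm⟩ hψ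

/-- Conditionally on `Q`, the variables `U` and `U'` are i.i.d., so the mixed moment factorises. -/
lemma integral_mul_comp_prodMk_eq_integral_sq
    (hQUU : MeasurePreserving (fun ω => (Q ω, U ω, U' ω)) μ (ρ.prod (ν.prod ν)))
    {ψ : α × β → ℝ} (hψ : Measurable ψ)
    (hint : Integrable (fun ω => ψ (Q ω, U' ω) * ψ (Q ω, U ω)) μ) :
    ∫ ω, ψ (Q ω, U' ω) * ψ (Q ω, U ω) ∂μ = ∫ ω, (∫ u, ψ (Q ω, u) ∂ν) ^ 2 ∂μ := by
  set F : α × β × β → ℝ := fun x => ψ (x.1, x.2.2) * ψ (x.1, x.2.1)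
  have hF : Measurable F := (hψ.comp (measurable_fst.prodMk measurable_snd.snd)).mul
    (hψ.comp (measurable_fst.prodMk measurable_snd.fst))
  have hg : Measurable fun q => ∫ u, ψ (q, u) ∂ν :=
    hψ.stronglyMeasurable.integral_prod_right'.measurable
  have hFint : Integrable F (ρ.prod (ν.prod ν)) :=
    (hQUU.integrable_comp hF.aestronglyMeasurable).mp hint
  calc ∫ ω, ψ (Q ω, U' ω) * ψ (Q ω, U ω) ∂μ = ∫ x, F x ∂(ρ.prod (ν.prod ν)) :=
        hQUU.integral_comp_of_aestronglyMeasurable hF.aestronglyMeasurable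
    _ = ∫ q, (∫ u, ψ (q, u) ∂ν) ^ 2 ∂ρ := by
        rw [integral_prod _ hFint]
        refine integral_congr_ae (ae_of_all _ fun q => ?_)
        show ∫ p, ψ (q, p.2) * ψ (q, p.1) ∂(ν.prod ν) = (∫ u, ψ (q, u) ∂ν) ^ 2
        rw [sq, ← integral_prod_mul (fun u => ψ (q, u)) (fun u => ψ (q, u))]
        exact integral_congr_ae (ae_of_all _ fun p => mul_comm _ _)
    _ = ∫ ω, (∫ u, ψ (Q ω, u) ∂ν) ^ 2 ∂μ :=
        ((measurePreserving_fst.comp hQUU).integral_comp_of_aestronglyMeasurable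
          (hg.pow_const 2).aestronglyMeasurable).symm

lemma integral_mul_comp_prodMk_eq_integral_condExp_sq [IsFiniteMeasure μ] [StandardBorelSpace β]
    [Nonempty β] (hQUU : MeasurePreserving (fun ω => (Q ω, U ω, U' ω)) μ (ρ.prod (ν.prod ν)))
    {ψ : α × β → ℝ} (hψ : Measurable ψ) (hL2 : MemLp (fun ω => ψ (Q ω, U ω)) 2 μ) :
    ∫ ω, ψ (Q ω, U' ω) * ψ (Q ω, U ω) ∂μ
      = ∫ ω, (μ[fun ω => ψ (Q ω, U ω) | mα.comap Q] ω) ^ 2 ∂μ := by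
  have hL2' := ((identDistrib_comp_prodMk_swap hQUU hψ).memLp_iff).mpr hL2
  rw [integral_mul_comp_prodMk_eq_integral_sq hQUU hψ (hL2'.integrable_mul hL2)]
  refine integral_congr_ae ?_
  filter_upwards [condExp_comp_prodMk_ae_eq_integral hQUU.prodMk_of_prodMk_prodMk_fst
    hψ.stronglyMeasurable (hL2.integrable one_le_two)] with ω hω
  rw [hω]

end ExchangeableCopies

lemma ProbabilityTheory.IdentDistrib.variance_sub_of_integral_eq_zero {Ω : Type*}
    [MeasurableSpace Ω] {μ : Measure Ω} [IsProbabilityMeasure μ] {X Y : Ω → ℝ}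
    (hXY : IdentDistrib X Y μ μ) (hY : MemLp Y 2 μ) (hY0 : μ[Y] = 0) :
    Var[fun ω => X ω - Y ω; μ] = 2 * Var[Y; μ] - 2 * ∫ ω, X ω * Y ω ∂μ := by
  have hX := hXY.memLp_iff.mpr hY
  rw [variance_fun_sub hX hY, hXY.variance_eq, covariance_eq_sub hX hY, hXY.integral_eq, hY0]
  simp only [Pi.mul_apply, mul_zero, sub_zero]
  ring

lemma measurable_funSplitAt_symm {ι γ : Type*} [DecidableEq ι] [MeasurableSpace γ] (k : ι) :
    Measurable (Equiv.funSplitAt k γ).symm := by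
  refine measurable_pi_lambda _ fun j => ?_
  by_cases hj : j = k
  · subst hj
    simpa using measurable_fst
  · simpa [hj] using measurable_snd.eval

lemma funSplitAt_symm_restrict {ι γ : Type*} [DecidableEq ι] (k : ι) (w : ι → γ) (a : γ) :
    (Equiv.funSplitAt k γ).symm (a, fun j : {j // j ≠ k} => w j) = Function.update w k a := by
  funext j
  by_cases hj : j = k
  · subst hj
    simp
  · simp [hj]

section SplitAt

variable {K : ℕ}

/-- `I_S(w, w')` as a function of `(w_{-k}, w'_{-k})` and a value shared by `w_k` and `w'_k`. -/
def interactionContrastSplitAt (f : (Fin K → ℝ) → ℝ) (S : Finset (Fin K)) (k : Fin K)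
    (p : (({j // j ≠ k} → ℝ) × ({j // j ≠ k} → ℝ)) × ℝ) : ℝ :=
  interactionContrast f S ((Equiv.funSplitAt k ℝ).symm (p.2, p.1.1))
    ((Equiv.funSplitAt k ℝ).symm (p.2, p.1.2))

lemma measurable_interactionContrastSplitAt {f : (Fin K → ℝ) → ℝ} (hf : Measurable f)
    (S : Finset (Fin K)) (k : Fin K) : Measurable (interactionContrastSplitAt f S k) := by
  have hsplit := measurable_funSplitAt_symm (γ := ℝ) k
  exact (measurable_interactionContrast_s17 hf S).comp
    ((hsplit.comp (measurable_snd.prodMk measurable_fst.fst)).prodMk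
      (hsplit.comp (measurable_snd.prodMk measurable_fst.snd)))

lemma interactionContrastSplitAt_restrict (f : (Fin K → ℝ) → ℝ) {S : Finset (Fin K)}
    {k : Fin K} (hk : k ∉ S) (w w' : Fin K → ℝ) (a : ℝ) :
    interactionContrastSplitAt f S k ((fun j => w j, fun j => w' j), a)
      = interactionContrast f S (Function.update w k a) w' := by
  simp only [interactionContrastSplitAt, funSplitAt_symm_restrict,
    interactionContrast_update_right f hk]

end SplitAt

/-- With `T_k` swapping the `k`-th coordinates of `W` and `W'` (`k ∉ S`):
`Var(I_{S∪{k}}(W,W')) = 2 Var(I_S(W,W')) - 2 E[T_k(I_S(W,W')) I_S(W,W')]`, and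
`E[T_k(I_S(W,W')) I_S(W,W')] = E[(E[I_S(W,W') | W_{-k}, W'_{-k}])²] ≥ 0`. -/
theorem stmt17 {Ω : Type*} [MeasurableSpace Ω] (μ : Measure Ω) [IsProbabilityMeasure μ]
    {K : ℕ} (W W' : Ω → Fin K → ℝ)
    (hW : Measurable W) (hW' : Measurable W')
    (hiW : iIndepFun
      (fun i ω => W ω i) μ)
    (hcopy : μ.map W' = μ.map W)
    (hindep : IndepFun W W' μ)
    (f : (Fin K → ℝ) → ℝ) (hf : Measurable f)
    (hL2 : MemLp (fun ω => f (W ω)) 2 μ)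
    (S : Finset (Fin K)) (hS : S.Nonempty) (k : Fin K) (hk : k ∉ S)
    (TkIS : Ω → ℝ)
    (hTk : TkIS = fun ω => interactionContrast f S
      (Function.update (W ω) k (W' ω k)) (Function.update (W' ω) k (W ω k))) :
    (variance (fun ω => interactionContrast f (S ∪ {k}) (W ω) (W' ω)) μ
      = 2 * variance (fun ω => interactionContrast f S (W ω) (W' ω)) μ
        - 2 * ∫ ω, TkIS ω * interactionContrast f S (W ω) (W' ω) ∂μ) ∧
    (∫ ω, TkIS ω * interactionContrast f S (W ω) (W' ω) ∂μ
      = ∫ ω, ((μ[fun ω' => interactionContrast f S (W ω') (W' ω')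
          | coordSigmaPairNot W W' k]) ω)^2 ∂μ) ∧
    0 ≤ ∫ ω, TkIS ω * interactionContrast f S (W ω) (W' ω) ∂μ := by
  have : ∀ i, IsProbabilityMeasure (μ.map (W · i)) :=
    fun i => Measure.isProbabilityMeasure_map hW.eval.aemeasurable
  have hWW' := measurePreserving_prodMk_of_iIndepFun hW hW' hiW hcopy hindep
  have hfπ : MemLp f 2 (Measure.pi fun i => μ.map (W · i)) := by
    rw [← (measurePreserving_fst.comp hWW').map_eq]
    exact (memLp_map_measure_iff hf.aestronglyMeasurable hW.aemeasurable).mpr hL2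
  set I : Ω → ℝ := fun ω => interactionContrast f S (W ω) (W' ω)
  have hI : MemLp I 2 μ := (memLp_interactionContrast_s17 hfπ S).comp_measurePreserving hWW'
  have hI0 : μ[I] = 0 := (hWW'.integral_comp_of_aestronglyMeasurable
    (measurable_interactionContrast_s17 hf S).aestronglyMeasurable).trans
      (integral_interactionContrast_eq_zero (hfπ.integrable one_le_two) hS)
  set ψ := interactionContrastSplitAt f S k
  have hψ := measurable_interactionContrastSplitAt hf S k
  have hIψ : I = fun ω => ψ ((fun j => W ω j, fun j => W' ω j), W ω k) := by
    simp only [I, ψ, interactionContrastSplitAt_restrict f hk, Function.update_eq_self]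
  have hTψ : TkIS = fun ω => ψ ((fun j => W ω j, fun j => W' ω j), W' ω k) := by
    simp only [hTk, ψ, interactionContrastSplitAt_restrict f hk,
      interactionContrast_update_right f hk]
  have hQUU := (measurePreserving_restrict_eval_prod _ k).comp hWW'
  have hE : ∫ ω, TkIS ω * I ω ∂μ = ∫ ω, (μ[I | coordSigmaPairNot W W' k] ω) ^ 2 ∂μ := by
    rw [hTψ, hIψ]
    exact integral_mul_comp_prodMk_eq_integral_condExp_sq
      (Q := fun ω => (fun j : {j // j ≠ k} => W ω j, fun j : {j // j ≠ k} => W' ω j))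
      (U := fun ω => W ω k) (U' := fun ω => W' ω k) hQUU hψ (hIψ ▸ hI)
  refine ⟨?_, hE, hE ▸ integral_nonneg fun _ => sq_nonneg _⟩
  have hJ : (fun ω => interactionContrast f (S ∪ {k}) (W ω) (W' ω)) = fun ω => TkIS ω - I ω := by
    simp only [hTk, I, interactionContrast_union_singleton f hk]
  rw [hJ]
  exact (hIψ ▸ hTψ ▸ identDistrib_comp_prodMk_swap hQUU hψ).variance_sub_of_integral_eq_zero hI hI0
end
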